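/- Set μ₀ = 1 and fix μ₁ ∈ ℝ and a control value u ∈ ℝ. On the open set Ω = {(x₁, x₂, p₁, p₂) ∈ ℝ⁴ : x₁² + x₂² < 1} consider the vector field F_u(x₁, x₂, p₁, p₂) = ( x₂, u·((1 − x₁² − x₂²)/(1 − x₁²))^(3/2) − x₁, −∂H/∂x₁, −∂H/∂x₂ ), where H is Pontryagin's function below, and let H₁(x₁, x₂, p₂) = μ₁·√(1 − x₁² − x₂²)/(1 − x₁²) + p₂·((1 − x₁² − x₂²)/(1 − x₁²))^(3/2). Then at every point of Ω lying on the singular locus, i.e. satisfying p₂ = −μ₁·√(1 − x₁²)/(1 − x₁² − x₂²) and p₁ = −x₂·( μ₁·x₁·√(1 − x₁²) + √(1 − x₁² − x₂²) ) / ( (1 − x₁²)·(1 − x₁² − x₂²) ), the partial derivative with respect to u of the iterated directional derivative F_u(F_u(H₁)) equals −(1 − x₁² − x₂²)^(3/2)/(1 − x₁²)³, which is strictly negative. Consequently the singular trajectory has order 1 and violates the generalized Legendre–Clebsch condition (−1)·(∂/∂u)(d²H₁/dt²) ≤ 0. -/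

import Mathlib

/-!
On the disc `x₁² + x₂² < 1` every quantity in the problem is a combination, with coefficients
polynomial in `(x, p)`, of the functions `√(1 - x₁² - x₂²)ᵐ / √(1 - x₁²)ⁿ`, and the partial
derivatives of these are again of that form. Writing `H = H₀ + u H₁` with
`H₀ = p₁ x₂ - p₂ x₁ - √(1 - x₁² - x₂²)/(1 - x₁²) + 1`, the field splits as `F_u = F₀ + u F₁`
into the Hamiltonian fields of `H₀` and `H₁`. Hence `F_u(H₁) = F₀(H₁) + u {H₁, H₁} = F₀(H₁) =: G`
does not depend on `u`, and `F_u(F_u(H₁)) = F₀(G) + u F₁(G)` is affine in `u` with slope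
`F₁(G)`. The given `(p₁, p₂)` solve `H₁ = G = 0`, and using these two relations the slope
`F₁(G)` collapses to `-√(1 - x₁² - x₂²)³ / √(1 - x₁²)⁶`.
-/

open Real

/-- Pontryagin's function (normal case `μ₀ = 1`) for the optimal control
problem to which the isoperimetric problem for `λ`-convex curves on the
hyperbolic plane of curvature `-1` is reduced. -/
noncomputable def pontryaginH (μ₁ x₁ x₂ p₁ p₂ u : ℝ) : ℝ :=
  p₁ * x₂ + p₂ * (u * ((1 - x₁ ^ 2 - x₂ ^ 2) / (1 - x₁ ^ 2)) ^ ((3 : ℝ) / 2) - x₁)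
    + μ₁ * u * Real.sqrt (1 - x₁ ^ 2 - x₂ ^ 2) / (1 - x₁ ^ 2)
    - (Real.sqrt (1 - x₁ ^ 2 - x₂ ^ 2) / (1 - x₁ ^ 2) - 1)

/-- The combined phase-adjoint vector field on `ℝ⁴`, with the control held at
the constant value `u`: the phase equations together with the adjoint
equations `ṗᵢ = -∂H/∂xᵢ`. A point `z : ℝ × ℝ × ℝ × ℝ` is read as
`(x₁, x₂, p₁, p₂)`. -/
noncomputable def combinedField (μ₁ u : ℝ) (z : ℝ × ℝ × ℝ × ℝ) : ℝ × ℝ × ℝ × ℝ :=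
  (z.2.1,
   u * ((1 - z.1 ^ 2 - z.2.1 ^ 2) / (1 - z.1 ^ 2)) ^ ((3 : ℝ) / 2) - z.1,
   -(deriv (fun y => pontryaginH μ₁ y z.2.1 z.2.2.1 z.2.2.2 u) z.1),
   -(deriv (fun y => pontryaginH μ₁ z.1 y z.2.2.1 z.2.2.2 u) z.2.1))

/-- The switching function `H₁ = ∂H/∂u` as a function on `ℝ⁴`. -/
noncomputable def switchingFn (μ₁ : ℝ) (z : ℝ × ℝ × ℝ × ℝ) : ℝ :=
  μ₁ * Real.sqrt (1 - z.1 ^ 2 - z.2.1 ^ 2) / (1 - z.1 ^ 2)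
    + z.2.2.2 * ((1 - z.1 ^ 2 - z.2.1 ^ 2) / (1 - z.1 ^ 2)) ^ ((3 : ℝ) / 2)

/-- The derivative of a scalar function along the flow of the combined
phase-adjoint vector field with the control held at `u`. -/
noncomputable def fieldDeriv (μ₁ u : ℝ) (f : ℝ × ℝ × ℝ × ℝ → ℝ)
    (z : ℝ × ℝ × ℝ × ℝ) : ℝ :=
  fderiv ℝ f z (combinedField μ₁ u z)

open Topology Filter

noncomputable def sqrtMonomial (m n : ℕ) (x₁ x₂ : ℝ) : ℝ :=
  √(1 - x₁ ^ 2 - x₂ ^ 2) ^ m / √(1 - x₁ ^ 2) ^ n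

noncomputable def sqrtMonomialDerivFst (m n : ℕ) (x₁ x₂ : ℝ) : ℝ :=
  sqrtMonomial m n x₁ x₂ * (n * x₁ / (1 - x₁ ^ 2) - m * x₁ / (1 - x₁ ^ 2 - x₂ ^ 2))

noncomputable def sqrtMonomialDerivSnd (m n : ℕ) (x₁ x₂ : ℝ) : ℝ :=
  -(sqrtMonomial m n x₁ x₂ * (m * x₂ / (1 - x₁ ^ 2 - x₂ ^ 2)))

theorem sqrt_pos_and_sq_sqrt {x₁ x₂ : ℝ} (h : x₁ ^ 2 + x₂ ^ 2 < 1) :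
    0 < √(1 - x₁ ^ 2 - x₂ ^ 2) ∧ 0 < √(1 - x₁ ^ 2) ∧
      √(1 - x₁ ^ 2 - x₂ ^ 2) ^ 2 = 1 - x₁ ^ 2 - x₂ ^ 2 ∧ √(1 - x₁ ^ 2) ^ 2 = 1 - x₁ ^ 2 := by
  have hs : 0 < 1 - x₁ ^ 2 - x₂ ^ 2 := by linarith
  have hw : 0 < 1 - x₁ ^ 2 := by nlinarith
  exact ⟨Real.sqrt_pos.2 hs, Real.sqrt_pos.2 hw, Real.sq_sqrt hs.le, Real.sq_sqrt hw.le⟩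

theorem HasFDerivAt.sqrtMonomial {E : Type*} [NormedAddCommGroup E] [NormedSpace ℝ E]
    {f g : E → ℝ} {f' g' : StrongDual ℝ E} {x : E} (m n : ℕ)
    (hf : HasFDerivAt f f' x) (hg : HasFDerivAt g g' x) (h : f x ^ 2 + g x ^ 2 < 1) :
    HasFDerivAt (fun y => sqrtMonomial m n (f y) (g y))
      (sqrtMonomialDerivFst m n (f x) (g x) • f' + sqrtMonomialDerivSnd m n (f x) (g x) • g') x := by
  have hs : 0 < 1 - f x ^ 2 - g x ^ 2 := by linarith
  have hw : 0 < 1 - f x ^ 2 := by nlinarith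
  obtain ⟨hS0, hW0, hS2, hW2⟩ := sqrt_pos_and_sq_sqrt h
  have hS := (((hf.pow 2).const_sub 1).sub (hg.pow 2)).sqrt hs.ne'
  have hW := ((hf.pow 2).const_sub 1).sqrt hw.ne'
  have hWinv := (hasDerivAt_inv (pow_ne_zero n hW0.ne')).comp_hasFDerivAt x (hW.pow n)
  refine ((hS.pow m).mul hWinv).congr_fderiv ?_ |>.congr_of_eventuallyEq
    (Eventually.of_forall fun y => div_eq_mul_inv _ _)
  ext V
  simp only [_root_.sqrtMonomial, sqrtMonomialDerivFst, sqrtMonomialDerivSnd, Function.comp_apply]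
  -- Beyond `S² = 1 - f x² - g x²` and `W² = 1 - f x²`, nothing about the square roots is needed.
  generalize √(1 - f x ^ 2 - g x ^ 2) = S at *
  generalize √(1 - f x ^ 2) = W at *
  rw [← hS2, ← hW2]
  rcases m with _ | m <;> rcases n with _ | n <;>
    simp only [add_apply, smul_apply, sub_apply, neg_apply, smul_eq_mul, nsmul_eq_mul,
      Nat.add_one_sub_one, Nat.cast_add, Nat.cast_one, Nat.cast_ofNat, CharP.cast_eq_zero,
      pow_zero, pow_one, zero_mul, mul_zero, zero_div, zero_sub] <;>
    field_simp <;> ring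

theorem HasDerivAt.sqrtMonomial {f g : ℝ → ℝ} {f' g' t : ℝ} (m n : ℕ)
    (hf : HasDerivAt f f' t) (hg : HasDerivAt g g' t) (h : f t ^ 2 + g t ^ 2 < 1) :
    HasDerivAt (fun y => sqrtMonomial m n (f y) (g y))
      (sqrtMonomialDerivFst m n (f t) (g t) * f' + sqrtMonomialDerivSnd m n (f t) (g t) * g') t := by
  simpa using (hf.hasFDerivAt.sqrtMonomial m n hg.hasFDerivAt h).hasDerivAt

theorem div_rpow_three_halves_eq_sqrtMonomial {x₁ x₂ : ℝ} (h : x₁ ^ 2 + x₂ ^ 2 < 1) :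
    ((1 - x₁ ^ 2 - x₂ ^ 2) / (1 - x₁ ^ 2)) ^ ((3 : ℝ) / 2) = sqrtMonomial 3 3 x₁ x₂ := by
  have hs : 0 ≤ 1 - x₁ ^ 2 - x₂ ^ 2 := by linarith
  have hw : 0 ≤ 1 - x₁ ^ 2 := by nlinarith
  rw [div_rpow hs hw, rpow_div_two_eq_sqrt _ hs, rpow_div_two_eq_sqrt _ hw, sqrtMonomial]
  norm_cast

theorem sqrt_div_eq_sqrtMonomial {x₁ x₂ : ℝ} (h : x₁ ^ 2 + x₂ ^ 2 < 1) :
    √(1 - x₁ ^ 2 - x₂ ^ 2) / (1 - x₁ ^ 2) = sqrtMonomial 1 2 x₁ x₂ := by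
  rw [sqrtMonomial, pow_one, (sqrt_pos_and_sq_sqrt h).2.2.2]

theorem pontryaginH_eq_sqrtMonomial {μ₁ x₁ x₂ p₁ p₂ u : ℝ} (h : x₁ ^ 2 + x₂ ^ 2 < 1) :
    pontryaginH μ₁ x₁ x₂ p₁ p₂ u = p₁ * x₂ + p₂ * (u * sqrtMonomial 3 3 x₁ x₂ - x₁)
      + (μ₁ * u - 1) * sqrtMonomial 1 2 x₁ x₂ + 1 := by
  rw [pontryaginH, div_rpow_three_halves_eq_sqrtMonomial h, mul_div_assoc,
    sqrt_div_eq_sqrtMonomial h]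
  ring

theorem switchingFn_eq_sqrtMonomial {μ₁ : ℝ} {z : ℝ × ℝ × ℝ × ℝ} (h : z.1 ^ 2 + z.2.1 ^ 2 < 1) :
    switchingFn μ₁ z =
      μ₁ * sqrtMonomial 1 2 z.1 z.2.1 + z.2.2.2 * sqrtMonomial 3 3 z.1 z.2.1 := by
  rw [switchingFn, div_rpow_three_halves_eq_sqrtMonomial h, mul_div_assoc,
    sqrt_div_eq_sqrtMonomial h]

theorem deriv_pontryaginH_x₁ {μ₁ x₁ x₂ p₁ p₂ u : ℝ} (h : x₁ ^ 2 + x₂ ^ 2 < 1) :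
    deriv (fun y => pontryaginH μ₁ y x₂ p₁ p₂ u) x₁ =
      p₂ * (u * sqrtMonomialDerivFst 3 3 x₁ x₂ - 1)
        + (μ₁ * u - 1) * sqrtMonomialDerivFst 1 2 x₁ x₂ := by
  have hnear : ∀ᶠ y in 𝓝 x₁, y ^ 2 + x₂ ^ 2 < 1 :=
    (by fun_prop : Continuous fun y : ℝ => y ^ 2 + x₂ ^ 2).continuousAt.eventually_lt
      continuousAt_const h
  have hM (m n : ℕ) := (hasDerivAt_id x₁).sqrtMonomial m n (hasDerivAt_const x₁ x₂) h
  refine HasDerivAt.deriv ?_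
  refine ((((((hM 3 3).const_mul u).sub (hasDerivAt_id x₁)).const_mul p₂).const_add
    (p₁ * x₂)).add ((hM 1 2).const_mul (μ₁ * u - 1))).add_const 1
    |>.congr_of_eventuallyEq (hnear.mono fun y hy => pontryaginH_eq_sqrtMonomial hy)
    |>.congr_deriv ?_
  simp

theorem deriv_pontryaginH_x₂ {μ₁ x₁ x₂ p₁ p₂ u : ℝ} (h : x₁ ^ 2 + x₂ ^ 2 < 1) :
    deriv (fun y => pontryaginH μ₁ x₁ y p₁ p₂ u) x₂ =
      p₁ + p₂ * u * sqrtMonomialDerivSnd 3 3 x₁ x₂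
        + (μ₁ * u - 1) * sqrtMonomialDerivSnd 1 2 x₁ x₂ := by
  have hnear : ∀ᶠ y in 𝓝 x₂, x₁ ^ 2 + y ^ 2 < 1 :=
    (by fun_prop : Continuous fun y : ℝ => x₁ ^ 2 + y ^ 2).continuousAt.eventually_lt
      continuousAt_const h
  have hM (m n : ℕ) := (hasDerivAt_const x₂ x₁).sqrtMonomial m n (hasDerivAt_id x₂) h
  refine HasDerivAt.deriv ?_
  refine (((((hasDerivAt_id x₂).const_mul p₁).add
    ((((hM 3 3).const_mul u).sub_const x₁).const_mul p₂)).add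
    ((hM 1 2).const_mul (μ₁ * u - 1))).add_const 1)
    |>.congr_of_eventuallyEq (hnear.mono fun y hy => pontryaginH_eq_sqrtMonomial hy)
    |>.congr_deriv ?_
  simp only [id_eq, mul_one, mul_zero]
  ring

/-- The Hamiltonian field of `H₀ = p₁ x₂ - p₂ x₁ - √(1 - x₁² - x₂²)/(1 - x₁²) + 1`,
where `H = H₀ + u H₁`. -/
noncomputable def driftField (z : ℝ × ℝ × ℝ × ℝ) : ℝ × ℝ × ℝ × ℝ :=
  (z.2.1, -z.1, z.2.2.2 + sqrtMonomialDerivFst 1 2 z.1 z.2.1,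
    -z.2.2.1 + sqrtMonomialDerivSnd 1 2 z.1 z.2.1)

/-- The Hamiltonian field of the switching function `H₁`. -/
noncomputable def controlField (μ₁ : ℝ) (z : ℝ × ℝ × ℝ × ℝ) : ℝ × ℝ × ℝ × ℝ :=
  (0, sqrtMonomial 3 3 z.1 z.2.1,
    -(μ₁ * sqrtMonomialDerivFst 1 2 z.1 z.2.1 + z.2.2.2 * sqrtMonomialDerivFst 3 3 z.1 z.2.1),
    -(μ₁ * sqrtMonomialDerivSnd 1 2 z.1 z.2.1 + z.2.2.2 * sqrtMonomialDerivSnd 3 3 z.1 z.2.1))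

noncomputable def switchingFnDeriv (μ₁ : ℝ) (z : ℝ × ℝ × ℝ × ℝ) : ℝ :=
  2 * μ₁ * z.1 * z.2.1 * sqrtMonomial 1 4 z.1 z.2.1
    + 3 * z.2.2.2 * z.1 * z.2.1 * sqrtMonomial 3 5 z.1 z.2.1
    - z.2.2.1 * sqrtMonomial 3 3 z.1 z.2.1 - z.2.1 * sqrtMonomial 2 5 z.1 z.2.1

theorem combinedField_eq_add_smul {μ₁ v x₁ x₂ p₁ p₂ : ℝ} (h : x₁ ^ 2 + x₂ ^ 2 < 1) :
    combinedField μ₁ v (x₁, x₂, p₁, p₂) =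
      driftField (x₁, x₂, p₁, p₂) + v • controlField μ₁ (x₁, x₂, p₁, p₂) := by
  simp only [combinedField, deriv_pontryaginH_x₁ h, deriv_pontryaginH_x₂ h,
    div_rpow_three_halves_eq_sqrtMonomial h, driftField, controlField, Prod.mk_add_mk,
    Prod.smul_mk, smul_eq_mul, Prod.mk.injEq]
  refine ⟨by ring, by ring, by ring, by ring⟩

theorem fieldDeriv_eq_add {μ₁ v x₁ x₂ p₁ p₂ : ℝ} (h : x₁ ^ 2 + x₂ ^ 2 < 1)
    (f : ℝ × ℝ × ℝ × ℝ → ℝ) :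
    fieldDeriv μ₁ v f (x₁, x₂, p₁, p₂) =
      fderiv ℝ f (x₁, x₂, p₁, p₂) (driftField (x₁, x₂, p₁, p₂))
        + v * fderiv ℝ f (x₁, x₂, p₁, p₂) (controlField μ₁ (x₁, x₂, p₁, p₂)) := by
  rw [fieldDeriv, combinedField_eq_add_smul h, map_add, map_smul, smul_eq_mul]

theorem eventually_nhds_sq_add_sq_lt_one {z : ℝ × ℝ × ℝ × ℝ} (h : z.1 ^ 2 + z.2.1 ^ 2 < 1) :
    ∀ᶠ y in 𝓝 z, y.1 ^ 2 + y.2.1 ^ 2 < 1 :=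
  (by fun_prop : Continuous fun y : ℝ × ℝ × ℝ × ℝ => y.1 ^ 2 + y.2.1 ^ 2).continuousAt.eventually_lt
    continuousAt_const h

theorem fderiv_switchingFn_apply {μ₁ x₁ x₂ p₁ p₂ : ℝ} (h : x₁ ^ 2 + x₂ ^ 2 < 1)
    (V : ℝ × ℝ × ℝ × ℝ) :
    fderiv ℝ (switchingFn μ₁) (x₁, x₂, p₁, p₂) V =
      (μ₁ * sqrtMonomialDerivFst 1 2 x₁ x₂ + p₂ * sqrtMonomialDerivFst 3 3 x₁ x₂) * V.1
        + (μ₁ * sqrtMonomialDerivSnd 1 2 x₁ x₂ + p₂ * sqrtMonomialDerivSnd 3 3 x₁ x₂) * V.2.1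
        + sqrtMonomial 3 3 x₁ x₂ * V.2.2.2 := by
  have hM (m n : ℕ) := hasFDerivAt_fst.sqrtMonomial m n hasFDerivAt_snd.fst
    (x := ((x₁, x₂, p₁, p₂) : ℝ × ℝ × ℝ × ℝ)) h
  have hp₂ : HasFDerivAt (fun z : ℝ × ℝ × ℝ × ℝ => z.2.2.2) _ (x₁, x₂, p₁, p₂) :=
    (ContinuousLinearMap.snd ℝ ℝ ℝ ∘L ContinuousLinearMap.snd ℝ ℝ (ℝ × ℝ) ∘L
      ContinuousLinearMap.snd ℝ ℝ (ℝ × ℝ × ℝ)).hasFDerivAt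
  have hH₁ := ((hM 1 2).const_mul μ₁).fun_add (hp₂.fun_mul (hM 3 3))
  have heq : switchingFn μ₁ =ᶠ[𝓝 (x₁, x₂, p₁, p₂)]
      fun z => μ₁ * sqrtMonomial 1 2 z.1 z.2.1 + z.2.2.2 * sqrtMonomial 3 3 z.1 z.2.1 :=
    (eventually_nhds_sq_add_sq_lt_one h).mono fun _ hy => switchingFn_eq_sqrtMonomial hy
  rw [heq.fderiv_eq, hH₁.fderiv]
  simp only [add_apply, smul_apply, smul_eq_mul, ContinuousLinearMap.comp_apply,
    ContinuousLinearMap.coe_fst', ContinuousLinearMap.coe_snd']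
  ring

theorem fderiv_switchingFn_controlField {μ₁ x₁ x₂ p₁ p₂ : ℝ} (h : x₁ ^ 2 + x₂ ^ 2 < 1) :
    fderiv ℝ (switchingFn μ₁) (x₁, x₂, p₁, p₂) (controlField μ₁ (x₁, x₂, p₁, p₂)) = 0 := by
  rw [fderiv_switchingFn_apply h, controlField]
  ring

theorem fderiv_switchingFn_driftField {μ₁ x₁ x₂ p₁ p₂ : ℝ} (h : x₁ ^ 2 + x₂ ^ 2 < 1) :
    fderiv ℝ (switchingFn μ₁) (x₁, x₂, p₁, p₂) (driftField (x₁, x₂, p₁, p₂)) =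
      switchingFnDeriv μ₁ (x₁, x₂, p₁, p₂) := by
  obtain ⟨hS0, hW0, hS2, hW2⟩ := sqrt_pos_and_sq_sqrt h
  rw [fderiv_switchingFn_apply h]
  simp only [driftField, switchingFnDeriv, sqrtMonomialDerivFst, sqrtMonomialDerivSnd,
    sqrtMonomial, Nat.cast_ofNat, Nat.cast_one]
  generalize √(1 - x₁ ^ 2 - x₂ ^ 2) = S at *
  generalize √(1 - x₁ ^ 2) = W at *
  rw [← hS2, ← hW2]
  field_simp
  ring

theorem fieldDeriv_switchingFn {μ₁ v x₁ x₂ p₁ p₂ : ℝ} (h : x₁ ^ 2 + x₂ ^ 2 < 1) :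
    fieldDeriv μ₁ v (switchingFn μ₁) (x₁, x₂, p₁, p₂) = switchingFnDeriv μ₁ (x₁, x₂, p₁, p₂) := by
  rw [fieldDeriv_eq_add h, fderiv_switchingFn_driftField h, fderiv_switchingFn_controlField h,
    mul_zero, add_zero]

theorem fieldDeriv_fieldDeriv_switchingFn {μ₁ v x₁ x₂ p₁ p₂ : ℝ} (h : x₁ ^ 2 + x₂ ^ 2 < 1) :
    fieldDeriv μ₁ v (fieldDeriv μ₁ v (switchingFn μ₁)) (x₁, x₂, p₁, p₂) =
      fieldDeriv μ₁ v (switchingFnDeriv μ₁) (x₁, x₂, p₁, p₂) := by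
  have heq : fieldDeriv μ₁ v (switchingFn μ₁) =ᶠ[𝓝 (x₁, x₂, p₁, p₂)] switchingFnDeriv μ₁ :=
    (eventually_nhds_sq_add_sq_lt_one h).mono fun _ hy => fieldDeriv_switchingFn hy
  rw [fieldDeriv, fieldDeriv, heq.fderiv_eq]

theorem switchingFn_eq_zero {μ₁ x₁ x₂ p₁ p₂ : ℝ} (h : x₁ ^ 2 + x₂ ^ 2 < 1)
    (hp₂ : p₂ = -μ₁ * √(1 - x₁ ^ 2) / (1 - x₁ ^ 2 - x₂ ^ 2)) :
    switchingFn μ₁ (x₁, x₂, p₁, p₂) = 0 := by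
  obtain ⟨hS0, hW0, hS2, -⟩ := sqrt_pos_and_sq_sqrt h
  rw [switchingFn_eq_sqrtMonomial h, sqrtMonomial, sqrtMonomial, hp₂]
  generalize √(1 - x₁ ^ 2 - x₂ ^ 2) = S at *
  generalize √(1 - x₁ ^ 2) = W at *
  rw [← hS2]
  field_simp
  ring

theorem switchingFnDeriv_eq_zero {μ₁ x₁ x₂ p₁ p₂ : ℝ} (h : x₁ ^ 2 + x₂ ^ 2 < 1)
    (hp₂ : p₂ = -μ₁ * √(1 - x₁ ^ 2) / (1 - x₁ ^ 2 - x₂ ^ 2))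
    (hp₁ : p₁ = -x₂ * (μ₁ * x₁ * √(1 - x₁ ^ 2) + √(1 - x₁ ^ 2 - x₂ ^ 2))
      / ((1 - x₁ ^ 2) * (1 - x₁ ^ 2 - x₂ ^ 2))) :
    switchingFnDeriv μ₁ (x₁, x₂, p₁, p₂) = 0 := by
  obtain ⟨hS0, hW0, hS2, hW2⟩ := sqrt_pos_and_sq_sqrt h
  simp only [switchingFnDeriv, sqrtMonomial, hp₁, hp₂]
  generalize √(1 - x₁ ^ 2 - x₂ ^ 2) = S at *
  generalize √(1 - x₁ ^ 2) = W at *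
  rw [← hS2, ← hW2]
  field_simp
  ring

theorem fderiv_switchingFnDeriv_controlField {μ₁ x₁ x₂ p₁ p₂ : ℝ} (h : x₁ ^ 2 + x₂ ^ 2 < 1)
    (hH₁ : switchingFn μ₁ (x₁, x₂, p₁, p₂) = 0) (hG : switchingFnDeriv μ₁ (x₁, x₂, p₁, p₂) = 0) :
    fderiv ℝ (switchingFnDeriv μ₁) (x₁, x₂, p₁, p₂) (controlField μ₁ (x₁, x₂, p₁, p₂)) =
      -((1 - x₁ ^ 2 - x₂ ^ 2) ^ ((3 : ℝ) / 2)) / (1 - x₁ ^ 2) ^ 3 := by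
  have hM (m n : ℕ) := hasFDerivAt_fst.sqrtMonomial m n hasFDerivAt_snd.fst
    (x := ((x₁, x₂, p₁, p₂) : ℝ × ℝ × ℝ × ℝ)) h
  have hx₁ : HasFDerivAt (fun z : ℝ × ℝ × ℝ × ℝ => z.1) _ (x₁, x₂, p₁, p₂) :=
    hasFDerivAt_fst (𝕜 := ℝ)
  have hx₂ : HasFDerivAt (fun z : ℝ × ℝ × ℝ × ℝ => z.2.1) _ (x₁, x₂, p₁, p₂) :=
    (hasFDerivAt_snd (𝕜 := ℝ)).fst
  have hp₁ : HasFDerivAt (fun z : ℝ × ℝ × ℝ × ℝ => z.2.2.1) _ (x₁, x₂, p₁, p₂) :=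
    (ContinuousLinearMap.fst ℝ ℝ ℝ ∘L ContinuousLinearMap.snd ℝ ℝ (ℝ × ℝ) ∘L
      ContinuousLinearMap.snd ℝ ℝ (ℝ × ℝ × ℝ)).hasFDerivAt
  have hp₂ : HasFDerivAt (fun z : ℝ × ℝ × ℝ × ℝ => z.2.2.2) _ (x₁, x₂, p₁, p₂) :=
    (ContinuousLinearMap.snd ℝ ℝ ℝ ∘L ContinuousLinearMap.snd ℝ ℝ (ℝ × ℝ) ∘L
      ContinuousLinearMap.snd ℝ ℝ (ℝ × ℝ × ℝ)).hasFDerivAt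
  have hGderiv := (((((hx₁.const_mul (2 * μ₁)).fun_mul hx₂).fun_mul (hM 1 4)).fun_add
    ((((hp₂.const_mul 3).fun_mul hx₁).fun_mul hx₂).fun_mul (hM 3 5))).fun_sub
    (hp₁.fun_mul (hM 3 3))).fun_sub (hx₂.fun_mul (hM 2 5))
  rw [HasFDerivAt.fderiv (f := switchingFnDeriv μ₁) hGderiv]
  rw [switchingFn_eq_sqrtMonomial h] at hH₁
  rw [switchingFnDeriv] at hG
  obtain ⟨hS0, hW0, hS2, hW2⟩ := sqrt_pos_and_sq_sqrt h
  have hs : 0 ≤ 1 - x₁ ^ 2 - x₂ ^ 2 := by linarith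
  simp only [controlField, sqrtMonomialDerivFst, sqrtMonomialDerivSnd, sqrtMonomial, pow_one,
    Nat.cast_ofNat, Nat.cast_one, one_mul, smul_add, neg_add_rev, mul_neg, neg_neg, sub_apply,
    add_apply, smul_apply, ContinuousLinearMap.coe_fst', smul_eq_mul, mul_zero,
    ContinuousLinearMap.comp_apply, ContinuousLinearMap.coe_snd', neg_mul, zero_add, add_zero,
    rpow_div_two_eq_sqrt _ hs, rpow_ofNat] at hH₁ hG ⊢
  generalize √(1 - x₁ ^ 2 - x₂ ^ 2) = S at *
  generalize √(1 - x₁ ^ 2) = W at *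
  have hR : W ^ 2 = S ^ 2 + x₂ ^ 2 := by linarith
  rw [← hS2, ← hW2]
  field_simp at hH₁ hG ⊢
  replace hH₁ := (mul_eq_zero.1 (hH₁.trans (mul_zero _))).resolve_left hS0.ne'
  replace hG := (mul_eq_zero.1 (hG.trans (mul_zero _))).resolve_left hS0.ne'
  linear_combination x₁ * (3 * S ^ 2 + 6 * x₂ ^ 2) * hH₁ - 3 * x₂ * hG
    + (S - x₁ * (3 * S ^ 2 * p₂ + μ₁ * W)) * hR

/-- The Legendre–Clebsch computation: at every point of the singular locus the
partial derivative with respect to the control `u` of the second derivative of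
the switching function along the flow equals
`-(1 - x₁² - x₂²)^(3/2)/(1 - x₁²)³ < 0`; hence the singular trajectory has
order 1 and violates the generalized Legendre–Clebsch condition. -/
theorem legendre_clebsch_violated (μ₁ u x₁ x₂ p₁ p₂ : ℝ)
    (hΩ : x₁ ^ 2 + x₂ ^ 2 < 1)
    (hp₂ : p₂ = -μ₁ * Real.sqrt (1 - x₁ ^ 2) / (1 - x₁ ^ 2 - x₂ ^ 2))
    (hp₁ : p₁ = -x₂ * (μ₁ * x₁ * Real.sqrt (1 - x₁ ^ 2) + Real.sqrt (1 - x₁ ^ 2 - x₂ ^ 2))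
      / ((1 - x₁ ^ 2) * (1 - x₁ ^ 2 - x₂ ^ 2))) :
    deriv (fun v : ℝ =>
        fieldDeriv μ₁ v (fieldDeriv μ₁ v (switchingFn μ₁)) (x₁, x₂, p₁, p₂)) u
      = -((1 - x₁ ^ 2 - x₂ ^ 2) ^ ((3 : ℝ) / 2)) / (1 - x₁ ^ 2) ^ 3 ∧
    -((1 - x₁ ^ 2 - x₂ ^ 2) ^ ((3 : ℝ) / 2)) / (1 - x₁ ^ 2) ^ 3 < 0 := by
  have hs : 0 < 1 - x₁ ^ 2 - x₂ ^ 2 := by linarith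
  have hw : 0 < 1 - x₁ ^ 2 := by nlinarith
  have hslope := fderiv_switchingFnDeriv_controlField hΩ (switchingFn_eq_zero hΩ hp₂)
    (switchingFnDeriv_eq_zero hΩ hp₂ hp₁)
  refine ⟨?_, div_neg_of_neg_of_pos (neg_neg_of_pos (rpow_pos_of_pos hs _)) (pow_pos hw 3)⟩
  simp_rw [fieldDeriv_fieldDeriv_switchingFn hΩ, fieldDeriv_eq_add hΩ, ← hslope]
  exact ((hasDerivAt_mul_const _).const_add _).deriv
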